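/- Let G be a maximal 3-γc-vertex critical graph with δ(G) ≥ 4 and α(G) = δ(G) + 1, let x be a vertex of degree δ(G), and suppose a maximum independent set I of G is ordered as x₁, x₂, …, x_{δ+1} and there is a path y₁, y₂, …, y_δ in G − I such that {x_i, y_i} is a connected dominating set of G − x_{i+1} for each 1 ≤ i ≤ δ. Then for all 2 ≤ i ≠ j ≤ δ + 1 with x_i ≠ x and x_j ≠ x, if x is adjacent to neither x_i nor x_j, then y_{i−1} is adjacent to y_{j−1}. -/

import Mathlib

open Finset

variable {V : Type*}

/-- `D` is a connected dominating set of `G`: every vertex is in `D` or adjacent to a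
vertex of `D`, and the subgraph induced by `D` is connected. -/
def IsConnDomSet (G : SimpleGraph V) (D : Set V) : Prop :=
  (∀ v : V, v ∈ D ∨ ∃ u ∈ D, G.Adj u v) ∧ (G.induce D).Connected

/-- The connected domination number `γc(G)`. -/
noncomputable def gammaC (G : SimpleGraph V) [Fintype V] : ℕ :=
  sInf {k | ∃ D : Finset V, D.card = k ∧ IsConnDomSet G ↑D}

/-- The independence number `α(G)`. -/
noncomputable def alpha (G : SimpleGraph V) [Fintype V] : ℕ :=
  sSup {k | ∃ I : Finset V, I.card = k ∧ (↑I : Set V).Pairwise fun u v => ¬ G.Adj u v}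

/-- The clique number `ω(G)`. -/
noncomputable def omegaNum (G : SimpleGraph V) [Fintype V] : ℕ :=
  sSup {k | ∃ W : Finset V, W.card = k ∧ (↑W : Set V).Pairwise G.Adj}

/-- The minimum degree `δ(G)`. -/
noncomputable def minDeg (G : SimpleGraph V) [Fintype V] : ℕ :=
  sInf {k | ∃ v : V, (G.neighborSet v).ncard = k}

/-- The vertex connectivity `κ(G)`: the minimum size of a set of vertices whose
deletion leaves a graph that is disconnected or has at most one vertex
(so `κ = n - 1` for the complete graph on `n` vertices). -/
noncomputable def kappa (G : SimpleGraph V) [Fintype V] : ℕ :=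
  sInf {k | ∃ S : Finset V, S.card = k ∧
    (¬ (G.induce (↑S : Set V)ᶜ).Connected ∨ ((↑S : Set V)ᶜ).Subsingleton)}

/-- `G` is `3`-`γc`-edge critical: `γc(G) = 3` and adding any missing edge decreases `γc`. -/
def EdgeCritical3 (G : SimpleGraph V) [Fintype V] : Prop :=
  gammaC G = 3 ∧ ∀ u v : V, u ≠ v → ¬ G.Adj u v →
    gammaC (G ⊔ SimpleGraph.fromEdgeSet {s(u, v)}) < 3

/-- `G` is `3`-`γc`-vertex critical: `G` is `2`-connected, `γc(G) = 3` and deleting any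
vertex decreases `γc`. -/
def VertexCritical3 (G : SimpleGraph V) [Fintype V] [DecidableEq V] : Prop :=
  2 ≤ kappa G ∧ gammaC G = 3 ∧ ∀ v : V, gammaC (G.induce {w | w ≠ v}) < 3

/-- `G` is maximal `3`-`γc`-vertex critical. -/
def MaximalVertexCritical3 (G : SimpleGraph V) [Fintype V] [DecidableEq V] : Prop :=
  EdgeCritical3 G ∧ VertexCritical3 G

/-- `D` is a connected dominating set of the vertex-deleted graph `G - w`. -/
def IsConnDomSetAvoiding (G : SimpleGraph V) (D : Set V) (w : V) : Prop :=
  w ∉ D ∧ (∀ v : V, v ≠ w → v ∈ D ∨ ∃ u ∈ D, G.Adj u v) ∧ (G.induce D).Connected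

/-!
Edge-criticality at the non-edge `xᵢxⱼ` gives, up to symmetry, a vertex `w` such that
`{xᵢ, w}` is a connected dominating set of `G - xⱼ` and `w ≁ xⱼ`. As `x`, `y_{i-1}` and `x₁`
are not adjacent to `xᵢ`, all three are adjacent to `w`. If `w` were not on the path, counting
the neighbours of `x` (one in each pair `{x_k, y_k}`, and `w`) would exceed `δ`, unless
`x = x_m` with `m ≥ 2`; then `N(x) ⊆ N(x₁)`, which no `3`-`γc`-vertex critical graph allows.
Hence `w = y_k`, and since `y_k` is adjacent to every `x_m` except `x_{k+1}`, `k = j - 1`.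
-/

open SimpleGraph

lemma Finset.exists_eq_pair_of_card_le_two {α : Type*} [DecidableEq α] {D : Finset α} {a : α}
    (hD : D.card ≤ 2) (ha : a ∈ D) : ∃ w, D = {a, w} := by
  have : Nonempty α := ⟨a⟩
  obtain ⟨w, hw⟩ := Finset.card_le_one_iff_subset_singleton.1
    (show (D.erase a).card ≤ 1 by rw [Finset.card_erase_of_mem ha]; omega)
  rcases Finset.subset_singleton_iff.1 hw with h | h
  · exact ⟨a, by rw [← Finset.insert_erase ha, h]; simp⟩
  · exact ⟨w, by rw [← Finset.insert_erase ha, h]⟩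

lemma Set.ncard_lt_ncard_of_injOn {α β : Type*} {s : Set α} {t : Set β} {f : α → β} {b : β}
    (hf : ∀ a ∈ s, f a ∈ t) (hinj : Set.InjOn f s) (hb : b ∈ t) (hfb : ∀ a ∈ s, f a ≠ b)
    (ht : t.Finite := by toFinite_tac) : s.ncard < t.ncard :=
  (Set.ncard_le_ncard_of_injOn f
    (fun a ha => Set.mem_sdiff_singleton.2 ⟨hf a ha, hfb a ha⟩) hinj
    (ht.subset Set.sdiff_subset)).trans_lt
    (Set.ncard_sdiff_singleton_lt_of_mem hb ht)

section InducedPair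

variable {G : SimpleGraph V}

lemma exists_adj_of_connected_induce {s : Set V} (h : (G.induce s).Connected) {a b : V}
    (ha : a ∈ s) (hb : b ∈ s) (hab : a ≠ b) : ∃ z ∈ s, G.Adj a z := by
  obtain ⟨p⟩ := h.preconnected ⟨a, ha⟩ ⟨b, hb⟩
  exact ⟨p.snd, p.snd.2, p.adj_snd (Walk.not_nil_of_ne (by simpa using hab))⟩

lemma adj_of_connected_induce_pair {a b : V} (h : (G.induce {a, b}).Connected) (hab : a ≠ b) :
    G.Adj a b := by
  obtain ⟨z, hz, haz⟩ := exists_adj_of_connected_induce h (by simp) (by simp) hab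
  rcases hz with rfl | rfl
  · exact absurd haz G.irrefl
  · exact haz

end InducedPair

section ConnDom

variable {G : SimpleGraph V}

lemma IsConnDomSetAvoiding.isConnDomSet {D : Set V} {u w : V}
    (hD : IsConnDomSetAvoiding G D w) (hu : u ∈ D) (huw : G.Adj u w) : IsConnDomSet G D :=
  ⟨fun v => (em (v = w)).elim (fun hv => Or.inr ⟨u, hu, hv ▸ huw⟩) (hD.2.1 v), hD.2.2⟩

lemma IsConnDomSetAvoiding.adj_of_not_adj {a w b v : V} (hD : IsConnDomSetAvoiding G {a, w} b)
    (hvb : v ≠ b) (hva : v ≠ a) (hvw : v ≠ w) (hav : ¬ G.Adj a v) : G.Adj w v := by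
  rcases hD.2.1 v hvb with h | ⟨u, hu, huv⟩
  · rcases h with h | h <;> contradiction
  · rcases hu with rfl | rfl
    · contradiction
    · exact huv

variable [Fintype V]

lemma gammaC_le_card {D : Finset V} (hD : IsConnDomSet G D) : gammaC G ≤ D.card :=
  Nat.sInf_le ⟨D, rfl, hD⟩

lemma SimpleGraph.Connected.exists_isConnDomSet_card_eq_gammaC (hG : G.Connected) :
    ∃ D : Finset V, D.card = gammaC G ∧ IsConnDomSet G D :=
  Nat.sInf_mem (s := {k | ∃ D : Finset V, D.card = k ∧ IsConnDomSet G ↑D})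
    ⟨_, Finset.univ, rfl, fun v => Or.inl (by simp),
      by rw [Finset.coe_univ]; exact (induceUnivIso G).connected_iff.mpr hG⟩

lemma IsConnDomSetAvoiding.not_adj {D : Finset V} {u w : V}
    (hD : IsConnDomSetAvoiding G D w) (hcard : D.card < gammaC G) (hu : u ∈ D) :
    ¬ G.Adj u w :=
  fun huw => (gammaC_le_card (hD.isConnDomSet hu huw)).not_gt hcard

lemma kappa_le_card {S : Finset V} (hS : ¬ (G.induce (↑S : Set V)ᶜ).Connected) :
    kappa G ≤ S.card :=
  Nat.sInf_le ⟨S, rfl, Or.inl hS⟩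

lemma connected_of_two_le_kappa (h : 2 ≤ kappa G) : G.Connected := by
  by_contra hG
  have := kappa_le_card (G := G) (S := ∅) (by
    rw [Finset.coe_empty, Set.compl_empty]
    exact fun hc => hG ((induceUnivIso G).connected_iff.mp hc))
  rw [Finset.card_empty] at this
  omega

lemma connected_induce_ne_of_two_le_kappa (h : 2 ≤ kappa G) (v : V) :
    (G.induce {w | w ≠ v}).Connected := by
  by_contra hG
  have hS : ((↑({v} : Finset V) : Set V))ᶜ = {w | w ≠ v} := by ext; simp
  have := kappa_le_card (G := G) (S := {v}) (by rwa [hS])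
  rw [Finset.card_singleton] at this
  omega

end ConnDom

section SupEdge

variable {G : SimpleGraph V} {a b : V}

lemma adj_of_sup_edge_adj {u v : V} (h : (G ⊔ edge a b).Adj u v)
    (huv : ¬ (u = a ∧ v = b ∨ u = b ∧ v = a)) : G.Adj u v := by
  rw [sup_adj, edge_adj] at h
  tauto

lemma isConnDomSetAvoiding_of_sup_edge {D : Set V} (hD : IsConnDomSet (G ⊔ edge a b) D)
    (hb : b ∉ D) : IsConnDomSetAvoiding G D b := by
  refine ⟨hb, fun v hv => ?_, hD.2.mono fun u v huv => ?_⟩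
  · rcases hD.1 v with h | ⟨u, hu, huv⟩
    · exact Or.inl h
    · exact Or.inr ⟨u, hu, adj_of_sup_edge_adj huv
        (by rintro (⟨-, rfl⟩ | ⟨rfl, -⟩) <;> contradiction)⟩
  · exact adj_of_sup_edge_adj (G := G) (a := a) (b := b) (u := u) (v := v) huv
      (by rintro (⟨-, h⟩ | ⟨h, -⟩); exacts [hb (h ▸ v.2), hb (h ▸ u.2)])

lemma isConnDomSet_of_sup_edge {D : Set V} (hD : IsConnDomSet (G ⊔ edge a b) D)
    (ha : a ∉ D) (hb : b ∉ D) : IsConnDomSet G D := by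
  refine ⟨fun v => ?_, (isConnDomSetAvoiding_of_sup_edge hD hb).2.2⟩
  rcases hD.1 v with h | ⟨u, hu, huv⟩
  · exact Or.inl h
  · exact Or.inr ⟨u, hu, adj_of_sup_edge_adj huv
      (by rintro (⟨rfl, -⟩ | ⟨rfl, -⟩) <;> contradiction)⟩

lemma adj_or_adj_of_isConnDomSet_sup_edge [DecidableEq V] {D : Finset V}
    (hD : IsConnDomSet (G ⊔ edge a b) D) (hcard : D.card ≤ 2) (ha : a ∈ D) (hb : b ∈ D)
    (hab : a ≠ b) {x : V} (hxa : x ≠ a) (hxb : x ≠ b) : G.Adj a x ∨ G.Adj b x := by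
  obtain rfl : D = {a, b} := (Finset.eq_of_subset_of_card_le
    (by simp [Finset.insert_subset_iff, ha, hb]) (by rwa [Finset.card_pair hab])).symm
  rcases hD.1 x with h | ⟨u, hu, hux⟩
  · simp_all
  · simp only [Finset.coe_pair, Set.mem_insert_iff, Set.mem_singleton_iff] at hu
    rcases hu with rfl | rfl
    · exact Or.inl (adj_of_sup_edge_adj hux (by tauto))
    · exact Or.inr (adj_of_sup_edge_adj hux (by tauto))

end SupEdge

section Critical

variable {G : SimpleGraph V} [Fintype V]

lemma EdgeCritical3.exists_isConnDomSet_sup_edge {a b : V} (hG : EdgeCritical3 G)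
    (hconn : G.Connected) (hab : a ≠ b) (hnadj : ¬ G.Adj a b) :
    ∃ D : Finset V, D.card ≤ 2 ∧ IsConnDomSet (G ⊔ edge a b) D := by
  obtain ⟨D, hcard, hD⟩ :=
    (hconn.mono le_sup_left : (G ⊔ edge a b).Connected).exists_isConnDomSet_card_eq_gammaC
  exact ⟨D, hcard ▸ Nat.le_of_lt_succ (hG.2 a b hab hnadj), hD⟩

variable [DecidableEq V]

lemma VertexCritical3.exists_isConnDomSetAvoiding (hG : VertexCritical3 G) (v : V) :
    ∃ D : Finset V, D.card ≤ 2 ∧ IsConnDomSetAvoiding G D v := by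
  obtain ⟨D, hcard, hdom, hconn⟩ :=
    (connected_induce_ne_of_two_le_kappa hG.1 v).exists_isConnDomSet_card_eq_gammaC
  have hlt := hG.2.2 v
  refine ⟨D.map (Function.Embedding.subtype _), by rw [Finset.card_map]; omega, by simp, fun u hu => ?_, ?_⟩
  · rcases hdom ⟨u, hu⟩ with h | ⟨z, hz, hzu⟩
    · exact Or.inl (Finset.mem_map_of_mem _ h)
    · exact Or.inr ⟨z, Finset.mem_map_of_mem _ hz, hzu⟩
  · let f : (G.induce {w | w ≠ v}).induce ↑D →g
        G.induce ↑(D.map (Function.Embedding.subtype _)) :=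
      { toFun := fun u => ⟨u.1.1, Finset.mem_map_of_mem _ u.2⟩
        map_rel' := id }
    refine hconn.map f ?_
    rintro ⟨u, hu⟩
    obtain ⟨u', hu', rfl⟩ := Finset.mem_map.1 hu
    exact ⟨⟨u', hu'⟩, rfl⟩

lemma VertexCritical3.not_neighborSet_subset (hG : VertexCritical3 G) {x v y : V} (hxv : x ≠ v)
    (hxy : G.Adj x y) : ¬ G.neighborSet x ⊆ G.neighborSet v := by
  intro hsub
  obtain ⟨D, hcard, hD⟩ := hG.exists_isConnDomSetAvoiding v
  have hlt : D.card < gammaC G := by rw [hG.2.1]; omega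
  have hDx : ∀ u ∈ D, ¬ G.Adj x u := fun u hu hxu => hD.not_adj hlt hu (G.adj_symm (hsub hxu))
  have hxD : x ∈ D := by
    rcases hD.2.1 x hxv with h | ⟨u, hu, hux⟩
    · exact h
    · exact absurd hux.symm (hDx u hu)
  have hD_eq : D = {x} := Finset.eq_singleton_iff_unique_mem.2 ⟨hxD, fun u hu => by
    by_contra hux
    obtain ⟨z, hz, hxz⟩ := exists_adj_of_connected_induce hD.2.2 hxD hu (Ne.symm hux)
    exact hDx z hz hxz⟩
  subst hD_eq
  -- `x` dominates `G - v` and its neighbour `y` dominates `v`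
  refine (gammaC_le_card (D := {x, y}) ⟨fun u => ?_, ?_⟩).not_gt
    (by rw [hG.2.1]; exact Finset.card_le_two.trans_lt (by norm_num))
  · by_cases huv : u = v
    · exact Or.inr ⟨y, by simp, huv ▸ G.adj_symm (hsub hxy)⟩
    · rcases hD.2.1 u huv with h | ⟨z, hz, hzu⟩
      · exact Or.inl (by simp_all)
      · exact Or.inr ⟨z, by simp_all, hzu⟩
  · rw [Finset.coe_pair]
    exact induce_pair_connected_of_adj hxy

end Critical

structure IsDominatingLadder (G : SimpleGraph V) (d : ℕ) (xs ys : ℕ → V) : Prop where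
  injOn_xs : Set.InjOn xs (Set.Icc 1 (d + 1))
  injOn_ys : Set.InjOn ys (Set.Icc 1 d)
  not_adj_xs : ∀ p ∈ Set.Icc 1 (d + 1), ∀ q ∈ Set.Icc 1 (d + 1), ¬ G.Adj (xs p) (xs q)
  xs_ne_ys : ∀ p ∈ Set.Icc 1 (d + 1), ∀ k ∈ Set.Icc 1 d, xs p ≠ ys k
  isConnDomSetAvoiding : ∀ k ∈ Set.Icc 1 d, IsConnDomSetAvoiding G {xs k, ys k} (xs (k + 1))

namespace IsDominatingLadder

variable {G : SimpleGraph V} {d : ℕ} {xs ys : ℕ → V}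

lemma adj_xs_ys (hL : IsDominatingLadder G d xs ys) {k : ℕ} (hk : k ∈ Set.Icc 1 d) :
    G.Adj (xs k) (ys k) :=
  adj_of_connected_induce_pair (hL.isConnDomSetAvoiding k hk).2.2
    (hL.xs_ne_ys k (Set.Icc_subset_Icc_right d.le_succ hk) k hk)

lemma adj_ys_xs (hL : IsDominatingLadder G d xs ys) {k m : ℕ} (hk : k ∈ Set.Icc 1 d)
    (hm : m ∈ Set.Icc 1 (d + 1)) (hmk : m ≠ k + 1) : G.Adj (ys k) (xs m) := by
  have ⟨hk1, hkd⟩ := hk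
  have hk' : k ∈ Set.Icc 1 (d + 1) := Set.Icc_subset_Icc_right d.le_succ hk
  by_cases hmk' : m = k
  · subst hmk'
    exact (hL.adj_xs_ys hk).symm
  rcases (hL.isConnDomSetAvoiding k hk).2.1 (xs m)
      (hL.injOn_xs.ne hm ⟨by omega, by omega⟩ hmk) with h | ⟨u, hu, hum⟩
  · rcases h with h | h
    · exact absurd (hL.injOn_xs hm hk' h) hmk'
    · exact absurd h (hL.xs_ne_ys m hm k hk)
  · rcases hu with rfl | rfl
    · exact absurd hum (hL.not_adj_xs k hk' m hm)
    · exact hum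

lemma not_adj_ys_xs_succ [Fintype V] [DecidableEq V] (hL : IsDominatingLadder G d xs ys)
    (hγ : 2 < gammaC G) {k : ℕ} (hk : k ∈ Set.Icc 1 d) : ¬ G.Adj (ys k) (xs (k + 1)) := by
  have hD := hL.isConnDomSetAvoiding k hk
  rw [← Finset.coe_pair] at hD
  exact hD.not_adj (Finset.card_le_two.trans_lt hγ) (by simp)

lemma ne_ys (hL : IsDominatingLadder G d xs ys) {x : V} {i j k : ℕ}
    (hi : i ∈ Set.Icc 1 (d + 1)) (hj : j ∈ Set.Icc 1 (d + 1)) (hij : i ≠ j)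
    (hxi : ¬ G.Adj x (xs i)) (hxj : ¬ G.Adj x (xs j)) (hk : k ∈ Set.Icc 1 d) : x ≠ ys k := by
  rintro rfl
  have ⟨hk1, hkd⟩ := hk
  by_cases hik : i = k + 1
  · exact hxj (hL.adj_ys_xs hk hj (by omega))
  · exact hxi (hL.adj_ys_xs hk hi hik)

lemma lt_ncard_neighborSet [Fintype V] (hL : IsDominatingLadder G d xs ys) {x w : V}
    (hxX : ∀ m ∈ Set.Icc 2 (d + 1), x ≠ xs m) (hxY : ∀ k ∈ Set.Icc 1 d, x ≠ ys k)
    (hxw : G.Adj x w) (hwX : ∀ m ∈ Set.Icc 1 (d + 1), w ≠ xs m)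
    (hwY : ∀ k ∈ Set.Icc 1 d, w ≠ ys k) : d < (G.neighborSet x).ncard := by
  classical
  -- each rung `{xs k, ys k}` contributes a neighbour of `x`
  let f : ℕ → V := fun k => if G.Adj x (xs k) then xs k else ys k
  have hf : ∀ k ∈ Set.Icc 1 d, f k ∈ G.neighborSet x := by
    intro k hk
    have ⟨hk1, hkd⟩ := hk
    by_cases hxk : G.Adj x (xs k)
    · simp [f, hxk]
    simp only [f, if_neg hxk, mem_neighborSet]
    rcases (hL.isConnDomSetAvoiding k hk).2.1 x (hxX (k + 1) ⟨by omega, by omega⟩) with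
      h | ⟨u, hu, hux⟩
    · rcases h with rfl | h
      · exact hL.adj_xs_ys hk
      · exact absurd h (hxY k hk)
    · rcases hu with rfl | rfl
      · exact absurd hux.symm hxk
      · exact hux.symm
  have hinj : Set.InjOn f (Set.Icc 1 d) := by
    intro p hp q hq hpq
    have hp' : p ∈ Set.Icc 1 (d + 1) := Set.Icc_subset_Icc_right d.le_succ hp
    have hq' : q ∈ Set.Icc 1 (d + 1) := Set.Icc_subset_Icc_right d.le_succ hq
    simp only [f] at hpq
    split_ifs at hpq
    · exact hL.injOn_xs hp' hq' hpq
    · exact absurd hpq (hL.xs_ne_ys p hp' q hq)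
    · exact absurd hpq.symm (hL.xs_ne_ys q hq' p hp)
    · exact hL.injOn_ys hp hq hpq
  have hfw : ∀ k ∈ Set.Icc 1 d, f k ≠ w := by
    intro k hk
    simp only [f]
    split_ifs
    · exact (hwX k (Set.Icc_subset_Icc_right d.le_succ hk)).symm
    · exact (hwY k hk).symm
  simpa using Set.ncard_lt_ncard_of_injOn hf hinj hxw hfw

lemma neighborSet_xs_subset [Fintype V] (hL : IsDominatingLadder G d xs ys) {m : ℕ}
    (hm : m ∈ Set.Icc 2 (d + 1)) (hdeg : (G.neighborSet (xs m)).ncard ≤ d) {w : V}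
    (hmw : G.Adj (xs m) w) (hw1 : G.Adj w (xs 1)) (hwY : ∀ k ∈ Set.Icc 1 d, w ≠ ys k) :
    G.neighborSet (xs m) ⊆ G.neighborSet (xs 1) := by
  intro u hu
  by_contra hu1
  have ⟨hm2, hmd⟩ := hm
  have hm' : m ∈ Set.Icc 1 (d + 1) := ⟨by omega, hmd⟩
  -- `ys (m - 1)` is the one `ys k` not adjacent to `xs m`; put `u` in its place
  let g : ℕ → V := fun k => if k = m - 1 then u else ys k
  have hg : ∀ k ∈ Set.Icc 1 d, g k ∈ G.neighborSet (xs m) := by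
    intro k hk
    have ⟨hk1, hkd⟩ := hk
    simp only [g]
    split_ifs with hkm
    · exact hu
    · exact (hL.adj_ys_xs hk hm' (by omega)).symm
  have hys1 : ∀ k ∈ Set.Icc 1 d, G.Adj (xs 1) (ys k) := fun k hk =>
    (hL.adj_ys_xs hk ⟨le_rfl, by omega⟩ (by have := hk.1; omega)).symm
  have hinj : Set.InjOn g (Set.Icc 1 d) := by
    intro p hp q hq hpq
    simp only [g] at hpq
    split_ifs at hpq with hpm hqm hqm
    · rw [hpm, hqm]
    · exact absurd (hpq ▸ hys1 q hq) hu1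
    · exact absurd (hpq ▸ hys1 p hp) hu1
    · exact hL.injOn_ys hp hq hpq
  have hgw : ∀ k ∈ Set.Icc 1 d, g k ≠ w := by
    intro k hk
    simp only [g]
    split_ifs
    · rintro rfl
      exact hu1 hw1.symm
    · exact (hwY k hk).symm
  have := Set.ncard_lt_ncard_of_injOn hg hinj hmw hgw
  simp only [Set.ncard_Icc_nat] at this
  omega

lemma exists_eq_ys [Fintype V] [DecidableEq V] (hL : IsDominatingLadder G d xs ys)
    (hG : VertexCritical3 G) {x w : V} (hdeg : (G.neighborSet x).ncard ≤ d)
    (hxY : ∀ k ∈ Set.Icc 1 d, x ≠ ys k) (hxw : G.Adj x w) (hw1 : G.Adj w (xs 1))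
    (hwX : ∀ m ∈ Set.Icc 1 (d + 1), w ≠ xs m) : ∃ k ∈ Set.Icc 1 d, w = ys k := by
  by_contra! hwY
  by_cases hxX : ∃ m ∈ Set.Icc 2 (d + 1), x = xs m
  · obtain ⟨m, ⟨hm2, hmd⟩, rfl⟩ := hxX
    exact hG.not_neighborSet_subset (hL.injOn_xs.ne ⟨by omega, hmd⟩ ⟨le_rfl, by omega⟩
      (by omega)) hxw (hL.neighborSet_xs_subset ⟨hm2, hmd⟩ hdeg hxw hw1 hwY)
  · push Not at hxX
    exact (hL.lt_ncard_neighborSet hxX hxY hxw hwX hwY).not_ge hdeg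

lemma adj_ys_pred [Fintype V] [DecidableEq V] (hL : IsDominatingLadder G d xs ys)
    (hG : VertexCritical3 G) {x : V} (hdeg : (G.neighborSet x).ncard ≤ d) {p q : ℕ}
    (hp : p ∈ Set.Icc 2 (d + 1)) (hq : q ∈ Set.Icc 2 (d + 1)) (hpq : p ≠ q)
    (hpx : xs p ≠ x) (hqx : xs q ≠ x) (hxp : ¬ G.Adj x (xs p)) (hxq : ¬ G.Adj x (xs q))
    {D : Finset V} (hcard : D.card ≤ 2) (hpD : xs p ∈ D)
    (hD : IsConnDomSetAvoiding G D (xs q)) : G.Adj (ys (p - 1)) (ys (q - 1)) := by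
  obtain ⟨w, rfl⟩ := Finset.exists_eq_pair_of_card_le_two hcard hpD
  have ⟨hp2, hpd⟩ := hp
  have ⟨hq2, hqd⟩ := hq
  have hp' : p ∈ Set.Icc 1 (d + 1) := ⟨by omega, hpd⟩
  have hq' : q ∈ Set.Icc 1 (d + 1) := ⟨by omega, hqd⟩
  have h1 : 1 ∈ Set.Icc 1 (d + 1) := ⟨le_rfl, by omega⟩
  have hp1 : p - 1 ∈ Set.Icc 1 d := ⟨by omega, by omega⟩
  have hγ : 2 < gammaC G := by rw [hG.2.1]; norm_num
  have hwq : ¬ G.Adj w (xs q) := hD.not_adj (Finset.card_le_two.trans_lt hγ) (by simp)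
  rw [Finset.coe_pair] at hD
  have hpw : G.Adj (xs p) w := by
    refine adj_of_connected_induce_pair hD.2.2 ?_
    rintro rfl
    rcases hD.2.1 x hqx.symm with h | ⟨u, hu, hux⟩
    · simp only [Set.mem_insert_iff, Set.mem_singleton_iff, or_self] at h
      exact hpx h.symm
    · simp only [Set.mem_insert_iff, Set.mem_singleton_iff, or_self] at hu
      exact hxp (hu ▸ hux).symm
  have hcov : ∀ v, v ≠ xs q → v ≠ xs p → ¬ G.Adj (xs p) v → G.Adj w v :=
    fun v hvq hvp hpv => hD.adj_of_not_adj hvq hvp (fun h => hpv (h ▸ hpw)) hpv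
  have hwx : G.Adj w x := hcov x hqx.symm hpx.symm fun h => hxp h.symm
  have hpy : ¬ G.Adj (xs p) (ys (p - 1)) := by
    have := hL.not_adj_ys_xs_succ hγ hp1
    rwa [Nat.sub_add_cancel (by omega : 1 ≤ p), adj_comm] at this
  have hwy : G.Adj w (ys (p - 1)) :=
    hcov _ (hL.xs_ne_ys q hq' _ hp1).symm (hL.xs_ne_ys p hp' _ hp1).symm hpy
  have hw1 : G.Adj w (xs 1) := hcov _ (hL.injOn_xs.ne h1 hq' (by omega))
    (hL.injOn_xs.ne h1 hp' (by omega)) (hL.not_adj_xs p hp' 1 h1)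
  have hwX : ∀ m ∈ Set.Icc 1 (d + 1), w ≠ xs m :=
    fun m hm h => hL.not_adj_xs p hp' m hm (h ▸ hpw)
  obtain ⟨k, hk, rfl⟩ := hL.exists_eq_ys hG hdeg (fun k hk => hL.ne_ys hp' hq' hpq hxp hxq hk)
    hwx.symm hw1 hwX
  obtain rfl : q = k + 1 := by
    by_contra h
    exact hwq (hL.adj_ys_xs hk hq' h)
  simpa using hwy.symm

end IsDominatingLadder

theorem stmt_1_general (G : SimpleGraph V) [Fintype V] [DecidableEq V]
    (h : MaximalVertexCritical3 G)
    (x : V) (hx : (G.neighborSet x).ncard = minDeg G)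
    (I : Finset V) (hIind : (↑I : Set V).Pairwise fun u v => ¬ G.Adj u v)
    (xs ys : ℕ → V)
    (hxsinj : Set.InjOn xs (Set.Icc 1 (minDeg G + 1)))
    (hxsI : ∀ i ∈ Set.Icc 1 (minDeg G + 1), xs i ∈ I)
    (hysinj : Set.InjOn ys (Set.Icc 1 (minDeg G)))
    (hysI : ∀ i ∈ Set.Icc 1 (minDeg G), ys i ∉ I)
    (hdom : ∀ i ∈ Set.Icc 1 (minDeg G),
      IsConnDomSetAvoiding G {xs i, ys i} (xs (i + 1)))
    (i j : ℕ) (hi : i ∈ Set.Icc 2 (minDeg G + 1)) (hj : j ∈ Set.Icc 2 (minDeg G + 1))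
    (hij : i ≠ j) (hxi : xs i ≠ x) (hxj : xs j ≠ x)
    (hadji : ¬ G.Adj x (xs i)) (hadjj : ¬ G.Adj x (xs j)) :
    G.Adj (ys (i - 1)) (ys (j - 1)) := by
  obtain ⟨hec, hvc⟩ := h
  have hL : IsDominatingLadder G (minDeg G) xs ys :=
    { injOn_xs := hxsinj
      injOn_ys := hysinj
      not_adj_xs := fun p hp q hq hpq => hIind (hxsI p hp) (hxsI q hq) hpq.ne hpq
      xs_ne_ys := fun p hp k hk h => hysI k hk (h ▸ hxsI p hp)
      isConnDomSetAvoiding := hdom }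
  have hi' : i ∈ Set.Icc 1 (minDeg G + 1) := Set.Icc_subset_Icc_left one_le_two hi
  have hj' : j ∈ Set.Icc 1 (minDeg G + 1) := Set.Icc_subset_Icc_left one_le_two hj
  obtain ⟨D, hcard, hD⟩ := hec.exists_isConnDomSet_sup_edge (connected_of_two_le_kappa hvc.1)
    (hxsinj.ne hi' hj' hij) (hL.not_adj_xs i hi' j hj')
  by_cases hiD : xs i ∈ D <;> by_cases hjD : xs j ∈ D
  · rcases adj_or_adj_of_isConnDomSet_sup_edge hD hcard hiD hjD (hxsinj.ne hi' hj' hij)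
      hxi.symm hxj.symm with h | h
    · exact absurd h.symm hadji
    · exact absurd h.symm hadjj
  · exact hL.adj_ys_pred hvc hx.le hi hj hij hxi hxj hadji hadjj hcard hiD
      (isConnDomSetAvoiding_of_sup_edge hD hjD)
  · rw [edge_comm] at hD
    exact (hL.adj_ys_pred hvc hx.le hj hi hij.symm hxj hxi hadjj hadji hcard hjD
      (isConnDomSetAvoiding_of_sup_edge hD hiD)).symm
  · exact absurd (gammaC_le_card (isConnDomSet_of_sup_edge hD hiD hjD)) (by rw [hvc.2.1]; omega)

/-- Let `G` be a maximal `3`-`γc`-vertex critical graph with `δ ≥ 4` and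
`α = δ + 1`, let `x` be a vertex of degree `δ`, and suppose a maximum independent set
`I` is ordered as `x₁, …, x_{δ+1}` (here `xs 1, …, xs (δ+1)`) and there is a path
`y₁, …, y_δ` (here `ys 1, …, ys δ`) in `G - I` such that `{xᵢ, yᵢ}` is a connected
dominating set of `G - x_{i+1}` for `1 ≤ i ≤ δ`.  Then for all `2 ≤ i ≠ j ≤ δ + 1`
with `xs i ≠ x` and `xs j ≠ x`, if `x` is adjacent to neither `xs i` nor `xs j`, then
`ys (i-1)` is adjacent to `ys (j-1)`. -/
theorem stmt_1 (G : SimpleGraph V) [Fintype V] [DecidableEq V]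
    (h : MaximalVertexCritical3 G)
    (hδ : 4 ≤ minDeg G) (hα : alpha G = minDeg G + 1)
    (x : V) (hx : (G.neighborSet x).ncard = minDeg G)
    (I : Finset V) (hIind : (↑I : Set V).Pairwise fun u v => ¬ G.Adj u v)
    (hIcard : I.card = alpha G)
    (xs ys : ℕ → V)
    (hxsinj : Set.InjOn xs (Set.Icc 1 (minDeg G + 1)))
    (hxsI : ∀ i ∈ Set.Icc 1 (minDeg G + 1), xs i ∈ I)
    (hysinj : Set.InjOn ys (Set.Icc 1 (minDeg G)))
    (hysI : ∀ i ∈ Set.Icc 1 (minDeg G), ys i ∉ I)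
    (hpath : ∀ i ∈ Set.Icc 1 (minDeg G - 1), G.Adj (ys i) (ys (i + 1)))
    (hdom : ∀ i ∈ Set.Icc 1 (minDeg G),
      IsConnDomSetAvoiding G {xs i, ys i} (xs (i + 1)))
    (i j : ℕ) (hi : i ∈ Set.Icc 2 (minDeg G + 1)) (hj : j ∈ Set.Icc 2 (minDeg G + 1))
    (hij : i ≠ j) (hxi : xs i ≠ x) (hxj : xs j ≠ x)
    (hadji : ¬ G.Adj x (xs i)) (hadjj : ¬ G.Adj x (xs j)) :
    G.Adj (ys (i - 1)) (ys (j - 1)) :=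
  stmt_1_general G h x hx I hIind xs ys hxsinj hxsI hysinj hysI hdom i j hi hj hij hxi hxj hadji
    hadjj
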